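/- Define F(θ̃) = -div( (∇⊥(-Δ)^{-1/2}(1-α²Δ)^{-1}θ̃) · (1-α²Δ)^{-1}θ̃ ). Then F : Ḣ⁻¹(Ω) → Ḣ⁻¹(Ω) is locally Lipschitz; more precisely ‖F(θ̃₁)-F(θ̃₂)‖_{Ḣ⁻¹} ≤ C(α) ‖θ̃₁-θ̃₂‖_{Ḣ⁻¹} (‖θ̃₁‖_{Ḣ⁻¹} + ‖θ̃₂‖_{Ḣ⁻¹}). -/

import Mathlib

open scoped BigOperators
open Filter

noncomputable section

/-- Frequencies on the 2D torus `[0,1]²`. -/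
abbrev Freq : Type := ℤ × ℤ
/-- Fourier coefficients of a (complex-valued) function on the torus. -/
abbrev Coef : Type := Freq → ℂ
/-- Fourier coefficients of a vector field on the torus. -/
abbrev VCoef : Type := Freq → ℂ × ℂ

/-- Euclidean norm `|k|` of a frequency. -/
def knorm (k : Freq) : ℝ := Real.sqrt ((k.1 : ℝ)^2 + (k.2 : ℝ)^2)

/-- Homogeneous Sobolev weight `(2π|k|)^{2s}` (vanishing at `k = 0` for `s ≠ 0`). -/
def wgt (s : ℝ) (k : Freq) : ℝ := (2 * Real.pi * knorm k) ^ (2 * s)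

/-- Squared homogeneous Sobolev seminorm `‖·‖_{Ḣ^s}²` (Parseval). -/
def hSobSq (s : ℝ) (a : Coef) : ℝ := ∑' k : Freq, wgt s k * ‖a k‖ ^ 2

/-- Homogeneous Sobolev seminorm `‖·‖_{Ḣ^s}`; `hSob 1 a = ‖∇a‖_{L²}`. -/
def hSob (s : ℝ) (a : Coef) : ℝ := Real.sqrt (hSobSq s a)

/-- Membership in the homogeneous Sobolev space `Ḣ^s`. -/
def MemhSob (s : ℝ) (a : Coef) : Prop := Summable fun k : Freq => wgt s k * ‖a k‖ ^ 2

/-- Squared inhomogeneous Sobolev norm `‖·‖_{H^s}²`. -/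
def SobSq (s : ℝ) (a : Coef) : ℝ := ∑' k : Freq, (1 + (2 * Real.pi * knorm k)^2) ^ s * ‖a k‖ ^ 2

/-- Inhomogeneous Sobolev norm `‖·‖_{H^s}`. -/
def Sob (s : ℝ) (a : Coef) : ℝ := Real.sqrt (SobSq s a)

/-- Membership in the Sobolev space `H^s`. -/
def MemSob (s : ℝ) (a : Coef) : Prop :=
  Summable fun k : Freq => (1 + (2 * Real.pi * knorm k)^2) ^ s * ‖a k‖ ^ 2

/-- Squared `L²` norm (Parseval). -/
def L2Sq (a : Coef) : ℝ := ∑' k : Freq, ‖a k‖ ^ 2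

/-- `L²` norm. -/
def L2n (a : Coef) : ℝ := Real.sqrt (L2Sq a)

/-- Mean-zero condition `∫_Ω θ = 0`. -/
def MeanZero (a : Coef) : Prop := a (0, 0) = 0

/-- The coefficients come from a real-valued function. -/
def RealCoef (a : Coef) : Prop := ∀ k : Freq, a (-k) = (starRingEnd ℂ) (a k)

/-- Norms for vector fields. -/
def vL2Sq (v : VCoef) : ℝ := ∑' k : Freq, (‖(v k).1‖ ^ 2 + ‖(v k).2‖ ^ 2)
def vhSobSq (s : ℝ) (v : VCoef) : ℝ := ∑' k : Freq, wgt s k * (‖(v k).1‖ ^ 2 + ‖(v k).2‖ ^ 2)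
def vSobSq (s : ℝ) (v : VCoef) : ℝ :=
  ∑' k : Freq, (1 + (2 * Real.pi * knorm k)^2) ^ s * (‖(v k).1‖ ^ 2 + ‖(v k).2‖ ^ 2)
def vSob (s : ℝ) (v : VCoef) : ℝ := Real.sqrt (vSobSq s v)
def vMemSob (s : ℝ) (v : VCoef) : Prop :=
  Summable fun k : Freq => (1 + (2 * Real.pi * knorm k)^2) ^ s * (‖(v k).1‖ ^ 2 + ‖(v k).2‖ ^ 2)
def vMemhSob (s : ℝ) (v : VCoef) : Prop :=
  Summable fun k : Freq => wgt s k * (‖(v k).1‖ ^ 2 + ‖(v k).2‖ ^ 2)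
def vRealCoef (v : VCoef) : Prop :=
  ∀ k : Freq, (v (-k)).1 = (starRingEnd ℂ) ((v k).1) ∧ (v (-k)).2 = (starRingEnd ℂ) ((v k).2)

/-- The velocity `v = ∇⊥(-Δ)^{-1/2}θ` in Fourier variables: `v̂(k) = i(-k₂,k₁)|k|⁻¹ θ̂(k)`. -/
def vel (a : Coef) : VCoef := fun k =>
  if k = (0, 0) then (0, 0)
  else (Complex.I * (-(k.2 : ℂ)) / ((knorm k : ℝ) : ℂ) * a k,
        Complex.I * ((k.1 : ℂ)) / ((knorm k : ℝ) : ℂ) * a k)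

/-- Fourier coefficients of `div(vθ)`:
`(div(vθ))^(k) = 2πi (k₁ (v̂⋆θ̂)₁(k) + k₂ (v̂⋆θ̂)₂(k))`. -/
def divV (v : VCoef) (a : Coef) : Coef := fun k =>
  (2 * Real.pi) * Complex.I *
    ((k.1 : ℂ) * ∑' j : Freq, (v j).1 * a (k - j) +
     (k.2 : ℂ) * ∑' j : Freq, (v j).2 * a (k - j))

/-- The (real) duality pairing `⟨b, φ⟩` between `Ḣ⁻¹` and `Ḣ¹` (Parseval). -/
def pairing (b φ : Coef) : ℝ := (∑' k : Freq, b k * (starRingEnd ℂ) (φ k)).re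

/-- The Helmholtz operator `1 - α²Δ` in Fourier variables. -/
def Jop (α : ℝ) (a : Coef) : Coef := fun k =>
  (((1 + α^2 * (2 * Real.pi * knorm k)^2 : ℝ)) : ℂ) * a k

/-- The inverse Helmholtz operator `(1 - α²Δ)^{-1}` in Fourier variables. -/
def Jinv (α : ℝ) (b : Coef) : Coef := fun k =>
  b k / (((1 + α^2 * (2 * Real.pi * knorm k)^2 : ℝ)) : ℂ)

/-- `θ : ℝ → Coef` is a (real, mean-zero) solution of the inviscid α-regularization of SQG:
`∂ₜ(1-α²Δ)θ + div(vθ) = 0`, `v = ∇⊥(-Δ)^{-1/2}θ`, read coefficientwise. -/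
def SolvesRSQG (α : ℝ) (θ : ℝ → Coef) : Prop :=
  (∀ t : ℝ, MeanZero (θ t) ∧ RealCoef (θ t)) ∧
  ∀ (k : Freq) (t : ℝ),
    HasDerivAt (fun s : ℝ => Jop α (θ s) k) (-(divV (vel (θ t)) (θ t) k)) t

/-- `θ` is a (real, mean-zero) solution of the SQG equation `∂ₜθ + div(vθ) = 0`,
`v = ∇⊥(-Δ)^{-1/2}θ`, on the time set `I`, read coefficientwise. -/
def SolvesSQGOn (I : Set ℝ) (θ : ℝ → Coef) : Prop :=
  (∀ t ∈ I, MeanZero (θ t) ∧ RealCoef (θ t)) ∧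
  ∀ (k : Freq), ∀ t ∈ I,
    HasDerivAt (fun s : ℝ => θ s k) (-(divV (vel (θ t)) (θ t) k)) t


/-- The nonlinearity
`F(θ̃) = -div((∇⊥(-Δ)^{-1/2}(1-α²Δ)^{-1}θ̃) (1-α²Δ)^{-1}θ̃)` in Fourier variables. -/
def Fop (α : ℝ) (b : Coef) : Coef := fun k => -(divV (vel (Jinv α b)) (Jinv α b) k)

namespace SQGAux

def gw (k : Freq) : ℝ := 1 + (2 * Real.pi * knorm k) ^ 2

lemma knorm_nonneg (k : Freq) : 0 ≤ knorm k := Real.sqrt_nonneg _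

lemma knorm_sq (k : Freq) : knorm k ^ 2 = (k.1 : ℝ)^2 + (k.2 : ℝ)^2 :=
  Real.sq_sqrt (by positivity)

lemma knorm_pos {k : Freq} (hk : k ≠ (0, 0)) : 0 < knorm k := by
  have h : k.1 ≠ 0 ∨ k.2 ≠ 0 := by
    by_contra h; push_neg at h; exact hk (Prod.ext h.1 h.2)
  refine Real.sqrt_pos.mpr ?_
  rcases h with h | h
  · have : (k.1 : ℝ) ≠ 0 := Int.cast_ne_zero.mpr h
    nlinarith [sq_nonneg ((k.2 : ℝ)), sq_pos_of_ne_zero this]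
  · have : (k.2 : ℝ) ≠ 0 := Int.cast_ne_zero.mpr h
    nlinarith [sq_nonneg ((k.1 : ℝ)), sq_pos_of_ne_zero this]

lemma one_le_gw (k : Freq) : 1 ≤ gw k := by
  have := sq_nonneg (2 * Real.pi * knorm k); unfold gw; linarith

lemma gw_pos (k : Freq) : 0 < gw k := lt_of_lt_of_le one_pos (one_le_gw k)

lemma gw_eq (k : Freq) : gw k = 1 + 4 * Real.pi ^ 2 * ((k.1 : ℝ)^2 + (k.2 : ℝ)^2) := by
  unfold gw; rw [mul_pow, mul_pow, knorm_sq]; ring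

lemma summable_int_aux : Summable (fun a : ℤ => (1 + (a : ℝ)^2)⁻¹) := by
  have hnat : Summable (fun n : ℕ => (1 + (n : ℝ)^2)⁻¹) := by
    have h1 : Summable (fun n : ℕ => (((n : ℝ) + 1) ^ 2)⁻¹) := by
      have h0 := (Real.summable_nat_pow_inv (p := 2)).mpr one_lt_two
      have := (summable_nat_add_iff (f := fun n : ℕ => (((n : ℝ)) ^ 2)⁻¹) 1).mpr h0
      simpa using this
    refine Summable.of_nonneg_of_le (fun n => by positivity) (fun n => ?_) (h1.mul_left 2)
    rw [show (2:ℝ) * ((((n:ℝ))+1)^2)⁻¹ = ((((n:ℝ))+1)^2/2)⁻¹ by rw [inv_div]; ring]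
    exact inv_anti₀ (by positivity) (by nlinarith [sq_nonneg ((n:ℝ)-1)])
  exact hnat.of_nat_of_neg (by simpa using hnat)

lemma summable_gw_inv_sq : Summable (fun k : Freq => ((gw k) ^ 2)⁻¹) := by
  have hprod : Summable (fun k : Freq => (1 + (k.1 : ℝ)^2)⁻¹ * (1 + (k.2 : ℝ)^2)⁻¹) :=
    summable_int_aux.mul_of_nonneg summable_int_aux
      (fun a => by positivity) (fun a => by positivity)
  refine Summable.of_nonneg_of_le (fun k => by positivity) (fun k => ?_) hprod
  have hpi : (1 : ℝ) ≤ 4 * Real.pi ^ 2 := by nlinarith [Real.pi_gt_three]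
  have h1 : (1 + (k.1:ℝ)^2) * (1 + (k.2:ℝ)^2) ≤ (gw k)^2 := by
    rw [gw_eq]
    set c := 4 * Real.pi ^ 2 with hc
    set s := (k.1:ℝ)^2 + (k.2:ℝ)^2 with hsdef
    have hs : 0 ≤ s := by positivity
    have hcs : s ≤ c * s := le_mul_of_one_le_left hs hpi
    have hcs2 : s ^ 2 ≤ (c * s) ^ 2 := pow_le_pow_left₀ hs hcs 2
    have hp : (k.1:ℝ)^2 * (k.2:ℝ)^2 ≤ s ^ 2 := by
      nlinarith [sq_nonneg ((k.1:ℝ)^2 - (k.2:ℝ)^2), sq_nonneg ((k.1:ℝ)*(k.2:ℝ))]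
    nlinarith [hcs, hcs2, hp, hs]
  rw [← mul_inv]
  exact inv_anti₀ (by positivity) h1

open scoped ENNReal NNReal

/-- Cauchy–Schwarz-type bound for tsums. -/
lemma tsum_sq_le_of_sq_le_mul {a p q : Freq → ℝ} (ha : ∀ i, 0 ≤ a i)
    (hp0 : ∀ i, 0 ≤ p i) (hq0 : ∀ i, 0 ≤ q i)
    (h : ∀ i, a i ^ 2 ≤ p i * q i) (hp : Summable p) (hq : Summable q) :
    Summable a ∧ (∑' i, a i) ^ 2 ≤ (∑' i, p i) * (∑' i, q i) := by
  have hle : ∀ i, a i ≤ (p i + q i) / 2 := by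
    intro i
    have h1 : a i ^ 2 ≤ ((p i + q i) / 2) ^ 2 := le_trans (h i) (by nlinarith [sq_nonneg (p i - q i)])
    calc a i = Real.sqrt (a i ^ 2) := (Real.sqrt_sq (ha i)).symm
    _ ≤ Real.sqrt (((p i + q i) / 2) ^ 2) := Real.sqrt_le_sqrt h1
    _ = (p i + q i) / 2 := Real.sqrt_sq (by have := hp0 i; have := hq0 i; linarith)
  have hsa : Summable a :=
    Summable.of_nonneg_of_le ha hle ((hp.add hq).div_const 2)
  refine ⟨hsa, ?_⟩
  have hP : 0 ≤ ∑' i, p i := tsum_nonneg hp0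
  have hQ : 0 ≤ ∑' i, q i := tsum_nonneg hq0
  have key : ∀ s : Finset Freq, ∑ i ∈ s, a i ≤ Real.sqrt ((∑' i, p i) * (∑' i, q i)) := by
    intro s
    have h1 : ∑ i ∈ s, a i ≤ ∑ i ∈ s, Real.sqrt (p i) * Real.sqrt (q i) := by
      refine Finset.sum_le_sum fun i _ => ?_
      have : a i ≤ Real.sqrt (p i * q i) := by
        calc a i = Real.sqrt (a i ^ 2) := (Real.sqrt_sq (ha i)).symm
        _ ≤ _ := Real.sqrt_le_sqrt (h i)
      simpa [Real.sqrt_mul (hp0 i)] using this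
    have h2 : (∑ i ∈ s, Real.sqrt (p i) * Real.sqrt (q i)) ^ 2 ≤
        (∑ i ∈ s, p i) * ∑ i ∈ s, q i := by
      have := Finset.sum_mul_sq_le_sq_mul_sq s (fun i => Real.sqrt (p i)) (fun i => Real.sqrt (q i))
      simpa [Real.sq_sqrt (hp0 _), Real.sq_sqrt (hq0 _)] using this
    have h3 : (∑ i ∈ s, p i) * ∑ i ∈ s, q i ≤ (∑' i, p i) * (∑' i, q i) := by
      have hps : ∑ i ∈ s, p i ≤ ∑' i, p i := Summable.sum_le_tsum s (fun i _ => hp0 i) hp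
      have hqs : ∑ i ∈ s, q i ≤ ∑' i, q i := Summable.sum_le_tsum s (fun i _ => hq0 i) hq
      exact mul_le_mul hps hqs (Finset.sum_nonneg fun i _ => hq0 i) hP
    have h4 : (∑ i ∈ s, a i) ^ 2 ≤ (∑' i, p i) * (∑' i, q i) := by
      calc (∑ i ∈ s, a i) ^ 2 ≤ (∑ i ∈ s, Real.sqrt (p i) * Real.sqrt (q i)) ^ 2 := by
            apply pow_le_pow_left₀ (Finset.sum_nonneg fun i _ => ha i) h1
      _ ≤ _ := le_trans h2 h3
    calc ∑ i ∈ s, a i = Real.sqrt ((∑ i ∈ s, a i) ^ 2) :=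
          (Real.sqrt_sq (Finset.sum_nonneg fun i _ => ha i)).symm
    _ ≤ _ := Real.sqrt_le_sqrt h4
  have h5 : ∑' i, a i ≤ Real.sqrt ((∑' i, p i) * (∑' i, q i)) := Summable.tsum_le_of_sum_le hsa key
  calc (∑' i, a i) ^ 2 ≤ Real.sqrt ((∑' i, p i) * (∑' i, q i)) ^ 2 :=
        pow_le_pow_left₀ (tsum_nonneg ha) h5 2
  _ = _ := Real.sq_sqrt (mul_nonneg hP hQ)

/-- ℓ² of shifted sequence -/
lemma summable_shift {f : Freq → ℝ} (hf : Summable f) (k : Freq) :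
    Summable (fun j : Freq => f (k - j)) :=
  ((Equiv.subLeft k).summable_iff (f := f)).mpr hf

lemma tsum_shift (f : Freq → ℝ≥0∞) (k : Freq) : (∑' j : Freq, f (k - j)) = ∑' j, f j := by
  simpa using (Equiv.subLeft k).tsum_eq f

lemma tsum_shift' (f : Freq → ℝ) (k : Freq) : (∑' j : Freq, f (k - j)) = ∑' j, f j := by
  simpa using (Equiv.subLeft k).tsum_eq f

lemma tsum_shiftr (f : Freq → ℝ≥0∞) (j : Freq) : (∑' k : Freq, f (k - j)) = ∑' k, f k := by
  simpa using (Equiv.subRight j).tsum_eq f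

/-- summability of the convolution summand, complex version -/
lemma conv_summand_summable {u w : Coef} (hu : Summable (fun j => ‖u j‖ ^ 2))
    (hw : Summable (fun j => ‖w j‖ ^ 2)) (k : Freq) :
    Summable (fun j : Freq => u j * w (k - j)) := by
  apply Summable.of_norm
  have hw' := summable_shift hw k
  refine Summable.of_nonneg_of_le (fun j => norm_nonneg _) (fun j => ?_)
    ((hu.add hw').div_const 2)
  rw [norm_mul]
  nlinarith [sq_nonneg (‖u j‖ - ‖w (k - j)‖), norm_nonneg (u j), norm_nonneg (w (k - j))]

lemma conv_l2 (u w : Coef)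
    (hu : Summable (fun j => gw j * ‖u j‖ ^ 2)) (hw : Summable (fun j => gw j * ‖w j‖ ^ 2)) :
    Summable (fun k : Freq => ‖∑' j : Freq, u j * w (k - j)‖ ^ 2) ∧
    ∑' k : Freq, ‖∑' j : Freq, u j * w (k - j)‖ ^ 2 ≤
      (2 * ∑' j : Freq, ((gw j) ^ 2)⁻¹) * ((∑' j, gw j * ‖u j‖ ^ 2) * ∑' j, gw j * ‖w j‖ ^ 2) := by
  set M : ℝ := 2 * ∑' j : Freq, ((gw j) ^ 2)⁻¹ with hM
  set F : Freq → ℝ := fun j => gw j * ‖u j‖ ^ 2 with hF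
  set G : Freq → ℝ := fun j => gw j * ‖w j‖ ^ 2 with hG
  have hF0 : ∀ j, 0 ≤ F j := fun j => mul_nonneg (le_of_lt (gw_pos j)) (sq_nonneg _)
  have hG0 : ∀ j, 0 ≤ G j := fun j => mul_nonneg (le_of_lt (gw_pos j)) (sq_nonneg _)
  have hu2 : Summable (fun j => ‖u j‖ ^ 2) :=
    Summable.of_nonneg_of_le (fun j => sq_nonneg _)
      (fun j => le_mul_of_one_le_left (sq_nonneg _) (one_le_gw j)) hu
  have hw2 : Summable (fun j => ‖w j‖ ^ 2) :=
    Summable.of_nonneg_of_le (fun j => sq_nonneg _)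
      (fun j => le_mul_of_one_le_left (sq_nonneg _) (one_le_gw j)) hw
  -- q-summability for each k
  have hqsum : ∀ k : Freq, Summable (fun j => F j * G (k - j)) := by
    intro k
    have hGb : ∀ j, G (k - j) ≤ ∑' m, G m := fun j => Summable.le_tsum hw (k - j) (fun m _ => hG0 m)
    refine Summable.of_nonneg_of_le (fun j => mul_nonneg (hF0 j) (hG0 _)) (fun j => ?_)
      (hu.mul_right (∑' m, G m))
    exact mul_le_mul_of_nonneg_left (hGb j) (hF0 j)
  -- pointwise bound ‖conv k‖^2 ≤ M * R k
  have hkey : ∀ k : Freq, ‖∑' j : Freq, u j * w (k - j)‖ ^ 2 ≤ M * ∑' j, F j * G (k - j) := by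
    intro k
    set a : Freq → ℝ := fun j => ‖u j‖ * ‖w (k - j)‖ with ha
    set p : Freq → ℝ := fun j => (gw j)⁻¹ * (gw (k - j))⁻¹ with hp
    set q : Freq → ℝ := fun j => F j * G (k - j) with hq
    have ha0 : ∀ j, 0 ≤ a j := fun j => mul_nonneg (norm_nonneg _) (norm_nonneg _)
    have hp0 : ∀ j, 0 ≤ p j := fun j =>
      mul_nonneg (inv_nonneg.2 (le_of_lt (gw_pos j))) (inv_nonneg.2 (le_of_lt (gw_pos _)))
    have hq0 : ∀ j, 0 ≤ q j := fun j => mul_nonneg (hF0 j) (hG0 _)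
    have haq : ∀ j, a j ^ 2 ≤ p j * q j := by
      intro j
      have e1 : gw j ≠ 0 := ne_of_gt (gw_pos j)
      have e2 : gw (k - j) ≠ 0 := ne_of_gt (gw_pos (k - j))
      have h1 : p j * q j = ‖u j‖ ^ 2 * ‖w (k - j)‖ ^ 2 := by
        show (gw j)⁻¹ * (gw (k - j))⁻¹ * (gw j * ‖u j‖ ^ 2 * (gw (k - j) * ‖w (k - j)‖ ^ 2)) = _
        field_simp
      rw [h1]
      show (‖u j‖ * ‖w (k - j)‖) ^ 2 ≤ _
      rw [mul_pow]
    have hpsum : Summable p := by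
      have h2 : Summable (fun j : Freq => ((gw j) ^ 2)⁻¹ + ((gw (k - j)) ^ 2)⁻¹) :=
        summable_gw_inv_sq.add (summable_shift summable_gw_inv_sq k)
      refine Summable.of_nonneg_of_le hp0 (fun j => ?_) h2
      have h3 : (0:ℝ) ≤ (gw j)⁻¹ := inv_nonneg.2 (le_of_lt (gw_pos j))
      have h4 : (0:ℝ) ≤ (gw (k - j))⁻¹ := inv_nonneg.2 (le_of_lt (gw_pos _))
      show (gw j)⁻¹ * (gw (k - j))⁻¹ ≤ _
      rw [← inv_pow, ← inv_pow]
      nlinarith [sq_nonneg ((gw j)⁻¹ - (gw (k - j))⁻¹)]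
    obtain ⟨hsa, hcs⟩ := tsum_sq_le_of_sq_le_mul ha0 hp0 hq0 haq hpsum (hqsum k)
    have hnorm : ‖∑' j : Freq, u j * w (k - j)‖ ≤ ∑' j, a j := by
      calc ‖∑' j : Freq, u j * w (k - j)‖ ≤ ∑' j, ‖u j * w (k - j)‖ :=
            norm_tsum_le_tsum_norm (by simpa [norm_mul] using hsa)
      _ = ∑' j, a j := by simp [ha, norm_mul]
    have hpM : ∑' j, p j ≤ M := by
      have h2 : Summable (fun j : Freq => ((gw j) ^ 2)⁻¹ + ((gw (k - j)) ^ 2)⁻¹) :=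
        summable_gw_inv_sq.add (summable_shift summable_gw_inv_sq k)
      have hle : ∑' j, p j ≤ ∑' j : Freq, (((gw j) ^ 2)⁻¹ + ((gw (k - j)) ^ 2)⁻¹) := by
        refine Summable.tsum_le_tsum (fun j => ?_) hpsum h2
        have h3 : (0:ℝ) ≤ (gw j)⁻¹ := inv_nonneg.2 (le_of_lt (gw_pos j))
        have h4 : (0:ℝ) ≤ (gw (k - j))⁻¹ := inv_nonneg.2 (le_of_lt (gw_pos _))
        show (gw j)⁻¹ * (gw (k - j))⁻¹ ≤ _
        rw [← inv_pow, ← inv_pow]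
        nlinarith [sq_nonneg ((gw j)⁻¹ - (gw (k - j))⁻¹)]
      have heq : ∑' j : Freq, (((gw j) ^ 2)⁻¹ + ((gw (k - j)) ^ 2)⁻¹) = M := by
        rw [Summable.tsum_add summable_gw_inv_sq (summable_shift summable_gw_inv_sq k), hM,
          tsum_shift' (fun j : Freq => ((gw j) ^ 2)⁻¹) k]
        ring
      linarith
    calc ‖∑' j : Freq, u j * w (k - j)‖ ^ 2 ≤ (∑' j, a j) ^ 2 :=
          pow_le_pow_left₀ (norm_nonneg _) hnorm 2
    _ ≤ (∑' j, p j) * (∑' j, q j) := hcs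
    _ ≤ M * ∑' j, F j * G (k - j) :=
          mul_le_mul_of_nonneg_right hpM (tsum_nonneg hq0)
  -- summability and value of ∑_k R k via ENNReal
  have hR0 : ∀ k, 0 ≤ ∑' j, F j * G (k - j) := fun k => tsum_nonneg fun j => mul_nonneg (hF0 j) (hG0 _)
  have hRenn : ∀ k : Freq, ENNReal.ofReal (∑' j, F j * G (k - j)) =
      ∑' j : Freq, ENNReal.ofReal (F j) * ENNReal.ofReal (G (k - j)) := by
    intro k
    rw [ENNReal.ofReal_tsum_of_nonneg (fun j => mul_nonneg (hF0 j) (hG0 _)) (hqsum k)]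
    exact tsum_congr fun j => ENNReal.ofReal_mul (hF0 j)
  have hsum_enn : (∑' k : Freq, ENNReal.ofReal (∑' j, F j * G (k - j))) =
      ENNReal.ofReal (∑' j, F j) * ENNReal.ofReal (∑' j, G j) := by
    calc (∑' k : Freq, ENNReal.ofReal (∑' j, F j * G (k - j)))
        = ∑' k : Freq, ∑' j : Freq, ENNReal.ofReal (F j) * ENNReal.ofReal (G (k - j)) :=
          tsum_congr hRenn
    _ = ∑' j : Freq, ∑' k : Freq, ENNReal.ofReal (F j) * ENNReal.ofReal (G (k - j)) :=
          ENNReal.tsum_comm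
    _ = ∑' j : Freq, ENNReal.ofReal (F j) * ∑' k : Freq, ENNReal.ofReal (G (k - j)) := by
          exact tsum_congr fun j => ENNReal.tsum_mul_left
    _ = ∑' j : Freq, ENNReal.ofReal (F j) * ∑' m : Freq, ENNReal.ofReal (G m) := by
          refine tsum_congr fun j => ?_
          rw [tsum_shiftr (fun m : Freq => ENNReal.ofReal (G m)) j]
    _ = _ := by
          rw [ENNReal.tsum_mul_right,
            ENNReal.ofReal_tsum_of_nonneg hF0 hu, ENNReal.ofReal_tsum_of_nonneg hG0 hw]
  have hfin : (∑' k : Freq, ENNReal.ofReal (∑' j, F j * G (k - j))) ≠ ⊤ := by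
    rw [hsum_enn]; exact ENNReal.mul_ne_top ENNReal.ofReal_ne_top ENNReal.ofReal_ne_top
  have hRsummable : Summable (fun k : Freq => ∑' j, F j * G (k - j)) := by
    have := ENNReal.summable_toReal hfin
    refine this.congr fun k => ?_
    rw [ENNReal.toReal_ofReal (hR0 k)]
  have hRval : (∑' k : Freq, ∑' j, F j * G (k - j)) = (∑' j, F j) * ∑' j, G j := by
    have h1 : ENNReal.ofReal (∑' k : Freq, ∑' j, F j * G (k - j)) =
        ENNReal.ofReal ((∑' j, F j) * ∑' j, G j) := by
      rw [ENNReal.ofReal_tsum_of_nonneg hR0 hRsummable, hsum_enn,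
        ENNReal.ofReal_mul (tsum_nonneg hF0)]
    exact (ENNReal.ofReal_eq_ofReal_iff (tsum_nonneg hR0)
      (mul_nonneg (tsum_nonneg hF0) (tsum_nonneg hG0))).mp h1
  have hM0 : 0 ≤ M := by
    have h0 : 0 ≤ ∑' j : Freq, ((gw j) ^ 2)⁻¹ := tsum_nonneg fun j => by positivity
    rw [hM]; linarith
  have hconv_summable : Summable (fun k : Freq => ‖∑' j : Freq, u j * w (k - j)‖ ^ 2) :=
    Summable.of_nonneg_of_le (fun k => sq_nonneg _) hkey (hRsummable.mul_left M)
  refine ⟨hconv_summable, ?_⟩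
  calc ∑' k : Freq, ‖∑' j : Freq, u j * w (k - j)‖ ^ 2
      ≤ ∑' k : Freq, M * ∑' j, F j * G (k - j) :=
        Summable.tsum_le_tsum hkey hconv_summable (hRsummable.mul_left M)
  _ = M * ((∑' j, F j) * ∑' j, G j) := by rw [tsum_mul_left, hRval]
  _ = _ := rfl

lemma wgt_nonneg (s : ℝ) (k : Freq) : 0 ≤ wgt s k := by
  have h1 := Real.pi_pos; have h2 := knorm_nonneg k
  exact Real.rpow_nonneg (by positivity) _

lemma wgt_zero (s : ℝ) (hs : s ≠ 0) : wgt s (0, 0) = 0 := by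
  have h : knorm (0, 0) = 0 := by simp [knorm]
  rw [wgt, h, mul_zero, Real.zero_rpow (by simpa using hs)]

lemma wgt_neg_one {k : Freq} (hk : k ≠ (0, 0)) :
    wgt (-1) k = ((2 * Real.pi * knorm k) ^ 2)⁻¹ := by
  have hx : 0 < 2 * Real.pi * knorm k := by
    have := knorm_pos hk; have := Real.pi_pos; positivity
  rw [wgt, show (2 * (-1 : ℝ)) = ((-2 : ℤ) : ℝ) by norm_num, Real.rpow_intCast]
  rw [zpow_neg, ← zpow_natCast]
  norm_num

/-- key pointwise bound for `Jinv`. -/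
lemma Jinv_S1_pointwise (α : ℝ) (hα : 0 < α) (b : Coef) (hb0 : MeanZero b) (k : Freq) :
    gw k * ‖Jinv α b k‖ ^ 2 ≤ (α⁻¹^2 + α⁻¹^4) * (wgt (-1) k * ‖b k‖ ^ 2) := by
  by_cases hk : k = (0, 0)
  · subst hk
    have : Jinv α b (0, 0) = 0 := by rw [Jinv, hb0, zero_div]
    rw [this, hb0]
    simp
  · set x : ℝ := 2 * Real.pi * knorm k with hx
    have hx0 : 0 < x := by
      have := knorm_pos hk; have := Real.pi_pos; positivity
    have hD : (0:ℝ) < 1 + α^2 * x^2 := by positivity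
    have hnorm : ‖Jinv α b k‖ ^ 2 = ‖b k‖ ^ 2 / (1 + α^2 * x^2) ^ 2 := by
      rw [Jinv, norm_div, div_pow]
      congr 1
      rw [Complex.norm_real, Real.norm_eq_abs, abs_of_pos hD]
    rw [hnorm, wgt_neg_one hk, ← hx]
    have hgw : gw k = 1 + x ^ 2 := rfl
    rw [hgw]
    rw [div_eq_mul_inv, ← mul_assoc]
    have hb2 : (0:ℝ) ≤ ‖b k‖ ^ 2 := sq_nonneg _
    -- reduce to (1+x²)·x² ≤ (α⁻²+α⁻⁴)·(1+α²x²)²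
    have hkey : (1 + x ^ 2) * x ^ 2 ≤ (α⁻¹^2 + α⁻¹^4) * (1 + α^2 * x^2) ^ 2 := by
      have ha2 : (0:ℝ) < α ^ 2 := by positivity
      have h1 : x ^ 2 ≤ α⁻¹^2 * (1 + α^2 * x^2) ^ 2 := by
        have e1 : α⁻¹^2 * (1 + α^2*x^2)^2 = (1 + α^2*x^2)^2 / α^2 := by
          field_simp
        rw [e1, le_div_iff₀ ha2]
        nlinarith [sq_nonneg (α * x), sq_nonneg (α^2 * x^2)]
      have h2 : x ^ 2 * x ^ 2 ≤ α⁻¹^4 * (1 + α^2 * x^2) ^ 2 := by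
        have e2 : α⁻¹^4 * (1 + α^2*x^2)^2 = (1 + α^2*x^2)^2 / α^4 := by
          field_simp
        rw [e2, le_div_iff₀ (by positivity : (0:ℝ) < α^4)]
        nlinarith [mul_nonneg (sq_nonneg α) (sq_nonneg x)]
      nlinarith [h1, h2]
    have hgoal : (1 + x ^ 2) / (1 + α ^ 2 * x ^ 2) ^ 2 ≤ (α⁻¹^2 + α⁻¹^4) / x ^ 2 := by
      rw [div_le_div_iff₀ (by positivity) (by positivity)]
      nlinarith [hkey]
    calc (1 + x ^ 2) * ‖b k‖ ^ 2 * ((1 + α ^ 2 * x ^ 2) ^ 2)⁻¹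
        = ((1 + x ^ 2) / (1 + α ^ 2 * x ^ 2) ^ 2) * ‖b k‖ ^ 2 := by ring
    _ ≤ ((α⁻¹^2 + α⁻¹^4) / x ^ 2) * ‖b k‖ ^ 2 := mul_le_mul_of_nonneg_right hgoal hb2
    _ = (α⁻¹^2 + α⁻¹^4) * ((x ^ 2)⁻¹ * ‖b k‖ ^ 2) := by ring

lemma Jinv_S1 (α : ℝ) (hα : 0 < α) (b : Coef) (hb0 : MeanZero b) (hb : MemhSob (-1) b) :
    Summable (fun k : Freq => gw k * ‖Jinv α b k‖ ^ 2) ∧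
    ∑' k : Freq, gw k * ‖Jinv α b k‖ ^ 2 ≤ (α⁻¹^2 + α⁻¹^4) * hSobSq (-1) b := by
  have hcomp := Jinv_S1_pointwise α hα b hb0
  have hs : Summable (fun k : Freq => (α⁻¹^2 + α⁻¹^4) * (wgt (-1) k * ‖b k‖ ^ 2)) :=
    hb.mul_left _
  have h1 : Summable (fun k : Freq => gw k * ‖Jinv α b k‖ ^ 2) :=
    Summable.of_nonneg_of_le
      (fun k => mul_nonneg (le_of_lt (gw_pos k)) (sq_nonneg _)) hcomp hs
  refine ⟨h1, ?_⟩
  calc ∑' k : Freq, gw k * ‖Jinv α b k‖ ^ 2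
      ≤ ∑' k : Freq, (α⁻¹^2 + α⁻¹^4) * (wgt (-1) k * ‖b k‖ ^ 2) := Summable.tsum_le_tsum hcomp h1 hs
  _ = (α⁻¹^2 + α⁻¹^4) * hSobSq (-1) b := by rw [tsum_mul_left]; rfl

lemma vel_norm_le (a : Coef) (k : Freq) :
    ‖(vel a k).1‖ ≤ ‖a k‖ ∧ ‖(vel a k).2‖ ≤ ‖a k‖ := by
  by_cases hk : k = (0, 0)
  · subst hk; simp [vel]
  · have hkn : 0 < knorm k := knorm_pos hk
    have h1 : |(k.1 : ℝ)| ≤ knorm k := by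
      rw [← Real.sqrt_sq_eq_abs]
      exact Real.sqrt_le_sqrt (by nlinarith [sq_nonneg ((k.2:ℝ))])
    have h2 : |(k.2 : ℝ)| ≤ knorm k := by
      rw [← Real.sqrt_sq_eq_abs]
      exact Real.sqrt_le_sqrt (by nlinarith [sq_nonneg ((k.1:ℝ))])
    simp only [vel, if_neg hk]
    constructor
    · rw [norm_mul]
      refine mul_le_of_le_one_left (norm_nonneg _) ?_
      rw [norm_div, norm_mul, Complex.norm_I, one_mul, norm_neg, Complex.norm_intCast,
        Complex.norm_real, Real.norm_eq_abs, abs_of_pos hkn]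
      exact div_le_one_of_le₀ h2 (le_of_lt hkn)
    · rw [norm_mul]
      refine mul_le_of_le_one_left (norm_nonneg _) ?_
      rw [norm_div, norm_mul, Complex.norm_I, one_mul, Complex.norm_intCast,
        Complex.norm_real, Real.norm_eq_abs, abs_of_pos hkn]
      exact div_le_one_of_le₀ h1 (le_of_lt hkn)

lemma S1_mono {u a : Coef} (hle : ∀ j, ‖u j‖ ≤ ‖a j‖)
    (ha : Summable (fun k : Freq => gw k * ‖a k‖ ^ 2)) :
    Summable (fun k : Freq => gw k * ‖u k‖ ^ 2) ∧
    ∑' k : Freq, gw k * ‖u k‖ ^ 2 ≤ ∑' k : Freq, gw k * ‖a k‖ ^ 2 := by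
  have hptw : ∀ k, gw k * ‖u k‖ ^ 2 ≤ gw k * ‖a k‖ ^ 2 := fun k =>
    mul_le_mul_of_nonneg_left
      (pow_le_pow_left₀ (norm_nonneg _) (hle k) 2) (le_of_lt (gw_pos k))
  have h1 : Summable (fun k : Freq => gw k * ‖u k‖ ^ 2) :=
    Summable.of_nonneg_of_le
      (fun k => mul_nonneg (le_of_lt (gw_pos k)) (sq_nonneg _)) hptw ha
  exact ⟨h1, Summable.tsum_le_tsum hptw h1 ha⟩

lemma MemhSob_sub {b₁ b₂ : Coef} (h1 : MemhSob (-1) b₁) (h2 : MemhSob (-1) b₂) :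
    MemhSob (-1) (b₁ - b₂) := by
  refine Summable.of_nonneg_of_le
    (fun k => mul_nonneg (wgt_nonneg _ _) (sq_nonneg _)) (fun k => ?_)
    ((h1.mul_left 2).add (h2.mul_left 2))
  have hw := wgt_nonneg (-1) k
  have hn : ‖(b₁ - b₂) k‖ ≤ ‖b₁ k‖ + ‖b₂ k‖ := by
    rw [Pi.sub_apply]; exact norm_sub_le _ _
  have hsq : ‖(b₁ - b₂) k‖ ^ 2 ≤ 2 * ‖b₁ k‖ ^ 2 + 2 * ‖b₂ k‖ ^ 2 := by
    nlinarith [norm_nonneg ((b₁ - b₂) k), norm_nonneg (b₁ k), norm_nonneg (b₂ k),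
      sq_nonneg (‖b₁ k‖ - ‖b₂ k‖)]
  nlinarith [mul_le_mul_of_nonneg_left hsq hw]

lemma l2_of_S1 {a : Coef} (ha : Summable (fun k : Freq => gw k * ‖a k‖ ^ 2)) :
    Summable (fun k : Freq => ‖a k‖ ^ 2) :=
  Summable.of_nonneg_of_le (fun j => sq_nonneg _)
    (fun j => le_mul_of_one_le_left (sq_nonneg _) (one_le_gw j)) ha

lemma cs_two (c1 c2 z1 z2 : ℂ) :
    ‖c1 * z1 + c2 * z2‖ ^ 2 ≤ (‖c1‖ ^ 2 + ‖c2‖ ^ 2) * (‖z1‖ ^ 2 + ‖z2‖ ^ 2) := by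
  have h1 : ‖c1 * z1 + c2 * z2‖ ≤ ‖c1‖ * ‖z1‖ + ‖c2‖ * ‖z2‖ := by
    calc ‖c1 * z1 + c2 * z2‖ ≤ ‖c1 * z1‖ + ‖c2 * z2‖ := norm_add_le _ _
    _ = _ := by rw [norm_mul, norm_mul]
  calc ‖c1 * z1 + c2 * z2‖ ^ 2 ≤ (‖c1‖ * ‖z1‖ + ‖c2‖ * ‖z2‖) ^ 2 :=
        pow_le_pow_left₀ (norm_nonneg _) h1 2
  _ ≤ _ := by
      nlinarith [sq_nonneg (‖c1‖ * ‖z2‖ - ‖c2‖ * ‖z1‖), norm_nonneg c1, norm_nonneg c2,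
        norm_nonneg z1, norm_nonneg z2]

lemma normsq_add_le (z w : ℂ) : ‖z + w‖ ^ 2 ≤ 2 * (‖z‖ ^ 2 + ‖w‖ ^ 2) := by
  have h1 : ‖z + w‖ ≤ ‖z‖ + ‖w‖ := norm_add_le _ _
  calc ‖z + w‖ ^ 2 ≤ (‖z‖ + ‖w‖) ^ 2 := pow_le_pow_left₀ (norm_nonneg _) h1 2
  _ ≤ _ := by nlinarith [sq_nonneg (‖z‖ - ‖w‖)]

lemma sq_add_sq_le (s t : ℝ) (hs : 0 ≤ s) (ht : 0 ≤ t) : s ^ 2 + t ^ 2 ≤ (s + t) ^ 2 := by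
  nlinarith [mul_nonneg hs ht]

lemma four_sq_le (m c : ℝ) (hm : 0 ≤ m) (hc : 0 ≤ c) :
    4 * m ^ 2 * c ^ 2 ≤ (2 * m * c + 1) ^ 2 := by
  nlinarith [mul_nonneg hm hc]


end SQGAux

set_option maxHeartbeats 3200000 in
/-- `F : Ḣ⁻¹(Ω) → Ḣ⁻¹(Ω)` is locally Lipschitz:
`‖F(θ̃₁)-F(θ̃₂)‖_{Ḣ⁻¹} ≤ C(α)‖θ̃₁-θ̃₂‖_{Ḣ⁻¹}(‖θ̃₁‖_{Ḣ⁻¹} + ‖θ̃₂‖_{Ḣ⁻¹})`. -/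
theorem Fop_locally_Lipschitz (α : ℝ) (hα : 0 < α) :
    ∃ C : ℝ, 0 < C ∧ ∀ b₁ b₂ : Coef,
      MeanZero b₁ → MeanZero b₂ → MemhSob (-1) b₁ → MemhSob (-1) b₂ →
      hSob (-1) (Fop α b₁ - Fop α b₂) ≤
        C * hSob (-1) (b₁ - b₂) * (hSob (-1) b₁ + hSob (-1) b₂) := by
  classical
  set CA : ℝ := α⁻¹ ^ 2 + α⁻¹ ^ 4 with hCAdef
  have hCA0 : 0 < CA := by rw [hCAdef]; positivity
  set M : ℝ := 2 * ∑' j : Freq, ((SQGAux.gw j) ^ 2)⁻¹ with hMdef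
  have hM0 : 0 ≤ M := by
    have h0 : 0 ≤ ∑' j : Freq, ((SQGAux.gw j) ^ 2)⁻¹ :=
      tsum_nonneg fun j => by positivity
    rw [hMdef]; linarith
  have hsqM : 0 ≤ Real.sqrt M := Real.sqrt_nonneg M
  refine ⟨2 * Real.sqrt M * CA + 1, by positivity, ?_⟩
  intro b₁ b₂ hm1 hm2 hb1 hb2
  set C : ℝ := 2 * Real.sqrt M * CA + 1 with hCdef
  have hC0 : 0 < C := by rw [hCdef]; positivity
  set bδ : Coef := b₁ - b₂ with hbδ
  have hmδ : MeanZero bδ := by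
    show b₁ (0, 0) - b₂ (0, 0) = 0
    rw [hm1, hm2, sub_zero]
  have hbδmem : MemhSob (-1) bδ := SQGAux.MemhSob_sub hb1 hb2
  set θ1 : Coef := Jinv α b₁ with hθ1
  set θ2 : Coef := Jinv α b₂ with hθ2
  set θδ : Coef := Jinv α bδ with hθδ
  obtain ⟨hS1θ1, hS1θ1le⟩ := SQGAux.Jinv_S1 α hα b₁ hm1 hb1
  obtain ⟨hS1θ2, hS1θ2le⟩ := SQGAux.Jinv_S1 α hα b₂ hm2 hb2
  obtain ⟨hS1θδ, hS1θδle⟩ := SQGAux.Jinv_S1 α hα bδ hmδ hbδmem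
  rw [← hCAdef] at hS1θ1le hS1θ2le hS1θδle
  simp only [← hθ1] at hS1θ1 hS1θ1le
  simp only [← hθ2] at hS1θ2 hS1θ2le
  simp only [← hθδ] at hS1θδ hS1θδle
  obtain ⟨hS1u1, hS1u1le⟩ := SQGAux.S1_mono (fun j => (SQGAux.vel_norm_le θ1 j).1) hS1θ1
  obtain ⟨hS1u2, hS1u2le⟩ := SQGAux.S1_mono (fun j => (SQGAux.vel_norm_le θ1 j).2) hS1θ1
  obtain ⟨hS1v1, hS1v1le⟩ := SQGAux.S1_mono (fun j => (SQGAux.vel_norm_le θ2 j).1) hS1θ2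
  obtain ⟨hS1v2, hS1v2le⟩ := SQGAux.S1_mono (fun j => (SQGAux.vel_norm_le θ2 j).2) hS1θ2
  obtain ⟨hS1w1, hS1w1le⟩ := SQGAux.S1_mono (fun j => (SQGAux.vel_norm_le θδ j).1) hS1θδ
  obtain ⟨hS1w2, hS1w2le⟩ := SQGAux.S1_mono (fun j => (SQGAux.vel_norm_le θδ j).2) hS1θδ
  obtain ⟨hA1s, hA1le⟩ := SQGAux.conv_l2 (fun j => (vel θ1 j).1) θδ hS1u1 hS1θδ
  obtain ⟨hA2s, hA2le⟩ := SQGAux.conv_l2 (fun j => (vel θ1 j).2) θδ hS1u2 hS1θδ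
  obtain ⟨hB1s, hB1le⟩ := SQGAux.conv_l2 (fun j => (vel θδ j).1) θ2 hS1w1 hS1θ2
  obtain ⟨hB2s, hB2le⟩ := SQGAux.conv_l2 (fun j => (vel θδ j).2) θ2 hS1w2 hS1θ2
  rw [← hMdef] at hA1le hA2le hB1le hB2le
  set A1 : Coef := fun k => ∑' j : Freq, (vel θ1 j).1 * θδ (k - j) with hA1def
  set A2 : Coef := fun k => ∑' j : Freq, (vel θ1 j).2 * θδ (k - j) with hA2def
  set B1 : Coef := fun k => ∑' j : Freq, (vel θδ j).1 * θ2 (k - j) with hB1def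
  set B2 : Coef := fun k => ∑' j : Freq, (vel θδ j).2 * θ2 (k - j) with hB2def
  have l2θ1 := SQGAux.l2_of_S1 hS1θ1
  have l2θ2 := SQGAux.l2_of_S1 hS1θ2
  have l2θδ := SQGAux.l2_of_S1 hS1θδ
  have l2u1 := SQGAux.l2_of_S1 hS1u1
  have l2u2 := SQGAux.l2_of_S1 hS1u2
  have l2v1 := SQGAux.l2_of_S1 hS1v1
  have l2v2 := SQGAux.l2_of_S1 hS1v2
  have l2w1 := SQGAux.l2_of_S1 hS1w1
  have l2w2 := SQGAux.l2_of_S1 hS1w2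
  have hθfe : ∀ m : Freq, θδ m = θ1 m - θ2 m := by
    intro m
    show Jinv α bδ m = Jinv α b₁ m - Jinv α b₂ m
    simp only [hbδ, Jinv, Pi.sub_apply, sub_div]
  have hwfe1 : ∀ j : Freq, (vel θδ j).1 = (vel θ1 j).1 - (vel θ2 j).1 := by
    intro j
    by_cases hj : j = (0, 0)
    · subst hj; simp [vel]
    · simp only [vel, if_neg hj, hθfe j]
      ring
  have hwfe2 : ∀ j : Freq, (vel θδ j).2 = (vel θ1 j).2 - (vel θ2 j).2 := by
    intro j
    by_cases hj : j = (0, 0)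
    · subst hj; simp [vel]
    · simp only [vel, if_neg hj, hθfe j]
      ring
  have hsplit1 : ∀ k : Freq,
      ((∑' j : Freq, (vel θ1 j).1 * θ1 (k - j)) - ∑' j : Freq, (vel θ2 j).1 * θ2 (k - j))
        = A1 k + B1 k := by
    intro k
    rw [← Summable.tsum_sub (SQGAux.conv_summand_summable l2u1 l2θ1 k)
      (SQGAux.conv_summand_summable l2v1 l2θ2 k)]
    simp only [hA1def, hB1def]
    rw [← Summable.tsum_add (SQGAux.conv_summand_summable l2u1 l2θδ k)
      (SQGAux.conv_summand_summable l2w1 l2θ2 k)]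
    refine tsum_congr fun j => ?_
    rw [hθfe (k - j), hwfe1 j]
    ring
  have hsplit2 : ∀ k : Freq,
      ((∑' j : Freq, (vel θ1 j).2 * θ1 (k - j)) - ∑' j : Freq, (vel θ2 j).2 * θ2 (k - j))
        = A2 k + B2 k := by
    intro k
    rw [← Summable.tsum_sub (SQGAux.conv_summand_summable l2u2 l2θ1 k)
      (SQGAux.conv_summand_summable l2v2 l2θ2 k)]
    simp only [hA2def, hB2def]
    rw [← Summable.tsum_add (SQGAux.conv_summand_summable l2u2 l2θδ k)
      (SQGAux.conv_summand_summable l2w2 l2θ2 k)]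
    refine tsum_congr fun j => ?_
    rw [hθfe (k - j), hwfe2 j]
    ring
  have hptw : ∀ k : Freq, wgt (-1) k * ‖(Fop α b₁ - Fop α b₂) k‖ ^ 2 ≤
      2 * (‖A1 k‖ ^ 2 + ‖B1 k‖ ^ 2) + 2 * (‖A2 k‖ ^ 2 + ‖B2 k‖ ^ 2) := by
    intro k
    have hrhs0 : 0 ≤ 2 * (‖A1 k‖ ^ 2 + ‖B1 k‖ ^ 2) + 2 * (‖A2 k‖ ^ 2 + ‖B2 k‖ ^ 2) := by
      positivity
    by_cases hk : k = (0, 0)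
    · subst hk
      rw [SQGAux.wgt_zero (-1) (by norm_num), zero_mul]
      exact hrhs0
    · have hrepr : (Fop α b₁ - Fop α b₂) k =
          -(2 * (Real.pi : ℂ) * Complex.I *
            ((k.1 : ℂ) * (A1 k + B1 k) + (k.2 : ℂ) * (A2 k + B2 k))) := by
        rw [← hsplit1 k, ← hsplit2 k]
        show -(divV (vel θ1) θ1 k) - -(divV (vel θ2) θ2 k) = _
        simp only [divV]
        push_cast
        ring
      have hn2πI : ‖2 * (Real.pi : ℂ) * Complex.I‖ = 2 * Real.pi := by
        rw [norm_mul, norm_mul, Complex.norm_I, mul_one, Complex.norm_real,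
          Real.norm_eq_abs, abs_of_pos Real.pi_pos]
        norm_num
      have hnormF : ‖(Fop α b₁ - Fop α b₂) k‖ =
          (2 * Real.pi) * ‖(k.1 : ℂ) * (A1 k + B1 k) + (k.2 : ℂ) * (A2 k + B2 k)‖ := by
        rw [hrepr, norm_neg, norm_mul, hn2πI]
      have hCS : ‖(k.1 : ℂ) * (A1 k + B1 k) + (k.2 : ℂ) * (A2 k + B2 k)‖ ^ 2 ≤
          ((k.1 : ℝ) ^ 2 + (k.2 : ℝ) ^ 2) * (‖A1 k + B1 k‖ ^ 2 + ‖A2 k + B2 k‖ ^ 2) := by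
        have h := SQGAux.cs_two ((k.1 : ℂ)) ((k.2 : ℂ)) (A1 k + B1 k) (A2 k + B2 k)
        rwa [Complex.norm_intCast, Complex.norm_intCast, sq_abs, sq_abs] at h
      have hwgtk : wgt (-1) k = (4 * Real.pi ^ 2 * ((k.1 : ℝ) ^ 2 + (k.2 : ℝ) ^ 2))⁻¹ := by
        rw [SQGAux.wgt_neg_one hk, mul_pow, mul_pow, SQGAux.knorm_sq]
        norm_num
      have hs0 : 0 < (k.1 : ℝ) ^ 2 + (k.2 : ℝ) ^ 2 := by
        have h := SQGAux.knorm_pos hk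
        rw [← SQGAux.knorm_sq]
        positivity
      have hd1 : ‖A1 k + B1 k‖ ^ 2 ≤ 2 * (‖A1 k‖ ^ 2 + ‖B1 k‖ ^ 2) :=
        SQGAux.normsq_add_le (A1 k) (B1 k)
      have hd2 : ‖A2 k + B2 k‖ ^ 2 ≤ 2 * (‖A2 k‖ ^ 2 + ‖B2 k‖ ^ 2) :=
        SQGAux.normsq_add_le (A2 k) (B2 k)
      have hπ : Real.pi ≠ 0 := Real.pi_ne_zero
      calc wgt (-1) k * ‖(Fop α b₁ - Fop α b₂) k‖ ^ 2
          = (4 * Real.pi ^ 2 * ((k.1 : ℝ) ^ 2 + (k.2 : ℝ) ^ 2))⁻¹ *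
            ((2 * Real.pi) ^ 2 *
              ‖(k.1 : ℂ) * (A1 k + B1 k) + (k.2 : ℂ) * (A2 k + B2 k)‖ ^ 2) := by
            rw [hwgtk, hnormF]; ring
      _ ≤ (4 * Real.pi ^ 2 * ((k.1 : ℝ) ^ 2 + (k.2 : ℝ) ^ 2))⁻¹ *
            ((2 * Real.pi) ^ 2 * (((k.1 : ℝ) ^ 2 + (k.2 : ℝ) ^ 2) *
              (‖A1 k + B1 k‖ ^ 2 + ‖A2 k + B2 k‖ ^ 2))) := by
            have hpos : (0:ℝ) ≤ (4 * Real.pi ^ 2 * ((k.1 : ℝ) ^ 2 + (k.2 : ℝ) ^ 2))⁻¹ := by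
              positivity
            exact mul_le_mul_of_nonneg_left
              (mul_le_mul_of_nonneg_left hCS (by positivity)) hpos
      _ = ‖A1 k + B1 k‖ ^ 2 + ‖A2 k + B2 k‖ ^ 2 := by
            field_simp
            ring
      _ ≤ _ := add_le_add hd1 hd2
  have hRHSsum : Summable (fun k : Freq =>
      2 * (‖A1 k‖ ^ 2 + ‖B1 k‖ ^ 2) + 2 * (‖A2 k‖ ^ 2 + ‖B2 k‖ ^ 2)) :=
    ((hA1s.add hB1s).mul_left 2).add ((hA2s.add hB2s).mul_left 2)
  have hLHSsum : Summable (fun k : Freq =>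
      wgt (-1) k * ‖(Fop α b₁ - Fop α b₂) k‖ ^ 2) :=
    Summable.of_nonneg_of_le
      (fun k => mul_nonneg (SQGAux.wgt_nonneg _ _) (sq_nonneg _)) hptw hRHSsum
  have hhs1 : hSobSq (-1) (Fop α b₁ - Fop α b₂) ≤
      2 * ((∑' k : Freq, ‖A1 k‖ ^ 2) + ∑' k : Freq, ‖B1 k‖ ^ 2) +
      2 * ((∑' k : Freq, ‖A2 k‖ ^ 2) + ∑' k : Freq, ‖B2 k‖ ^ 2) := by
    have h := Summable.tsum_le_tsum hptw hLHSsum hRHSsum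
    have hval : (∑' k : Freq, (2 * (‖A1 k‖ ^ 2 + ‖B1 k‖ ^ 2) + 2 * (‖A2 k‖ ^ 2 + ‖B2 k‖ ^ 2)))
        = 2 * ((∑' k : Freq, ‖A1 k‖ ^ 2) + ∑' k : Freq, ‖B1 k‖ ^ 2) +
          2 * ((∑' k : Freq, ‖A2 k‖ ^ 2) + ∑' k : Freq, ‖B2 k‖ ^ 2) := by
      rw [Summable.tsum_add ((hA1s.add hB1s).mul_left 2) ((hA2s.add hB2s).mul_left 2),
        tsum_mul_left, tsum_mul_left, Summable.tsum_add hA1s hB1s, Summable.tsum_add hA2s hB2s]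
    rw [hval] at h
    exact h
  -- numerical bounds for the four sums
  have hNδ0 : 0 ≤ hSobSq (-1) bδ :=
    tsum_nonneg fun k => mul_nonneg (SQGAux.wgt_nonneg _ _) (sq_nonneg _)
  have hN10 : 0 ≤ hSobSq (-1) b₁ :=
    tsum_nonneg fun k => mul_nonneg (SQGAux.wgt_nonneg _ _) (sq_nonneg _)
  have hN20 : 0 ≤ hSobSq (-1) b₂ :=
    tsum_nonneg fun k => mul_nonneg (SQGAux.wgt_nonneg _ _) (sq_nonneg _)
  have hT10 : 0 ≤ ∑' j : Freq, SQGAux.gw j * ‖θ1 j‖ ^ 2 :=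
    tsum_nonneg fun j => mul_nonneg (le_of_lt (SQGAux.gw_pos j)) (sq_nonneg _)
  have hT20 : 0 ≤ ∑' j : Freq, SQGAux.gw j * ‖θ2 j‖ ^ 2 :=
    tsum_nonneg fun j => mul_nonneg (le_of_lt (SQGAux.gw_pos j)) (sq_nonneg _)
  have hTδ0 : 0 ≤ ∑' j : Freq, SQGAux.gw j * ‖θδ j‖ ^ 2 :=
    tsum_nonneg fun j => mul_nonneg (le_of_lt (SQGAux.gw_pos j)) (sq_nonneg _)
  have hTu10 : 0 ≤ ∑' j : Freq, SQGAux.gw j * ‖(vel θ1 j).1‖ ^ 2 :=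
    tsum_nonneg fun j => mul_nonneg (le_of_lt (SQGAux.gw_pos j)) (sq_nonneg _)
  have hTu20 : 0 ≤ ∑' j : Freq, SQGAux.gw j * ‖(vel θ1 j).2‖ ^ 2 :=
    tsum_nonneg fun j => mul_nonneg (le_of_lt (SQGAux.gw_pos j)) (sq_nonneg _)
  have hTw10 : 0 ≤ ∑' j : Freq, SQGAux.gw j * ‖(vel θδ j).1‖ ^ 2 :=
    tsum_nonneg fun j => mul_nonneg (le_of_lt (SQGAux.gw_pos j)) (sq_nonneg _)
  have hTw20 : 0 ≤ ∑' j : Freq, SQGAux.gw j * ‖(vel θδ j).2‖ ^ 2 :=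
    tsum_nonneg fun j => mul_nonneg (le_of_lt (SQGAux.gw_pos j)) (sq_nonneg _)
  have hA1f : (∑' k : Freq, ‖A1 k‖ ^ 2) ≤ M * ((CA * hSobSq (-1) b₁) * (CA * hSobSq (-1) bδ)) := by
    refine le_trans hA1le (mul_le_mul_of_nonneg_left ?_ hM0)
    exact mul_le_mul (le_trans hS1u1le hS1θ1le) hS1θδle hTδ0
      (mul_nonneg (le_of_lt hCA0) hN10)
  have hA2f : (∑' k : Freq, ‖A2 k‖ ^ 2) ≤ M * ((CA * hSobSq (-1) b₁) * (CA * hSobSq (-1) bδ)) := by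
    refine le_trans hA2le (mul_le_mul_of_nonneg_left ?_ hM0)
    exact mul_le_mul (le_trans hS1u2le hS1θ1le) hS1θδle hTδ0
      (mul_nonneg (le_of_lt hCA0) hN10)
  have hB1f : (∑' k : Freq, ‖B1 k‖ ^ 2) ≤ M * ((CA * hSobSq (-1) bδ) * (CA * hSobSq (-1) b₂)) := by
    refine le_trans hB1le (mul_le_mul_of_nonneg_left ?_ hM0)
    exact mul_le_mul (le_trans hS1w1le hS1θδle) hS1θ2le hT20
      (mul_nonneg (le_of_lt hCA0) hNδ0)
  have hB2f : (∑' k : Freq, ‖B2 k‖ ^ 2) ≤ M * ((CA * hSobSq (-1) bδ) * (CA * hSobSq (-1) b₂)) := by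
    refine le_trans hB2le (mul_le_mul_of_nonneg_left ?_ hM0)
    exact mul_le_mul (le_trans hS1w2le hS1θδle) hS1θ2le hT20
      (mul_nonneg (le_of_lt hCA0) hNδ0)
  have hhs2 : hSobSq (-1) (Fop α b₁ - Fop α b₂) ≤
      4 * M * CA ^ 2 * hSobSq (-1) bδ * (hSobSq (-1) b₁ + hSobSq (-1) b₂) := by
    calc hSobSq (-1) (Fop α b₁ - Fop α b₂)
        ≤ 2 * ((∑' k : Freq, ‖A1 k‖ ^ 2) + ∑' k : Freq, ‖B1 k‖ ^ 2) +
          2 * ((∑' k : Freq, ‖A2 k‖ ^ 2) + ∑' k : Freq, ‖B2 k‖ ^ 2) := hhs1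
    _ ≤ 2 * ((M * ((CA * hSobSq (-1) b₁) * (CA * hSobSq (-1) bδ))) +
          (M * ((CA * hSobSq (-1) bδ) * (CA * hSobSq (-1) b₂)))) +
        2 * ((M * ((CA * hSobSq (-1) b₁) * (CA * hSobSq (-1) bδ))) +
          (M * ((CA * hSobSq (-1) bδ) * (CA * hSobSq (-1) b₂)))) := by
        refine add_le_add ?_ ?_
        · exact mul_le_mul_of_nonneg_left (add_le_add hA1f hB1f) (by norm_num)
        · exact mul_le_mul_of_nonneg_left (add_le_add hA2f hB2f) (by norm_num)
    _ = 4 * M * CA ^ 2 * hSobSq (-1) bδ * (hSobSq (-1) b₁ + hSobSq (-1) b₂) := by ring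
  -- final square-root step
  have hSδ0 : 0 ≤ hSob (-1) bδ := Real.sqrt_nonneg _
  have hS10 : 0 ≤ hSob (-1) b₁ := Real.sqrt_nonneg _
  have hS20 : 0 ≤ hSob (-1) b₂ := Real.sqrt_nonneg _
  have e1 : hSob (-1) bδ ^ 2 = hSobSq (-1) bδ := Real.sq_sqrt hNδ0
  have e2 : hSob (-1) b₁ ^ 2 = hSobSq (-1) b₁ := Real.sq_sqrt hN10
  have e3 : hSob (-1) b₂ ^ 2 = hSobSq (-1) b₂ := Real.sq_sqrt hN20
  have hRnn : 0 ≤ C * hSob (-1) bδ * (hSob (-1) b₁ + hSob (-1) b₂) :=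
    mul_nonneg (mul_nonneg (le_of_lt hC0) hSδ0) (add_nonneg hS10 hS20)
  have hkey : hSobSq (-1) (Fop α b₁ - Fop α b₂) ≤
      (C * hSob (-1) bδ * (hSob (-1) b₁ + hSob (-1) b₂)) ^ 2 := by
    have h12 : hSobSq (-1) b₁ + hSobSq (-1) b₂ ≤ (hSob (-1) b₁ + hSob (-1) b₂) ^ 2 := by
      rw [← e2, ← e3]
      exact SQGAux.sq_add_sq_le _ _ hS10 hS20
    have hC2 : 4 * M * CA ^ 2 ≤ C ^ 2 := by
      have hq : Real.sqrt M ^ 2 = M := Real.sq_sqrt hM0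
      calc 4 * M * CA ^ 2 = 4 * Real.sqrt M ^ 2 * CA ^ 2 := by rw [hq]
      _ ≤ (2 * Real.sqrt M * CA + 1) ^ 2 := SQGAux.four_sq_le _ _ hsqM (le_of_lt hCA0)
      _ = C ^ 2 := by rw [hCdef]
    calc hSobSq (-1) (Fop α b₁ - Fop α b₂)
        ≤ 4 * M * CA ^ 2 * hSobSq (-1) bδ * (hSobSq (-1) b₁ + hSobSq (-1) b₂) := hhs2
    _ ≤ C ^ 2 * hSobSq (-1) bδ * (hSobSq (-1) b₁ + hSobSq (-1) b₂) := by
        refine mul_le_mul_of_nonneg_right (mul_le_mul_of_nonneg_right hC2 hNδ0) ?_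
        linarith [hN10, hN20]
    _ ≤ C ^ 2 * hSobSq (-1) bδ * ((hSob (-1) b₁ + hSob (-1) b₂) ^ 2) := by
        refine mul_le_mul_of_nonneg_left h12 ?_
        exact mul_nonneg (sq_nonneg C) hNδ0
    _ = (C * hSob (-1) bδ * (hSob (-1) b₁ + hSob (-1) b₂)) ^ 2 := by
        rw [← e1]; ring
  calc hSob (-1) (Fop α b₁ - Fop α b₂)
      = Real.sqrt (hSobSq (-1) (Fop α b₁ - Fop α b₂)) := rfl
  _ ≤ Real.sqrt ((C * hSob (-1) bδ * (hSob (-1) b₁ + hSob (-1) b₂)) ^ 2) :=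
      Real.sqrt_le_sqrt hkey
  _ = C * hSob (-1) bδ * (hSob (-1) b₁ + hSob (-1) b₂) := Real.sqrt_sq hRnn


end
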